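/- Let u(x) := Σ_{j=1}^{∞} i_j(x)·4^{−j} on [0,1)². Then for every t ∈ [0,1) and every n ≥ 1, there exists h₀ > 0 such that for all h with 0 < h < h₀, the set { x ∈ [0,1)² : t ≤ u(x) ≤ t + h } is contained in the dyadic square Q_{t₁,…,t_n}, where t_j := ⌊4^j t⌋ − 4⌊4^{j−1} t⌋ are the base-4 digits of t. One may take h₀ := Σ_{j=1}^{n} t_j·4^{−j} + 4^{−n} − t > 0. -/

import Mathlib

open MeasureTheory Set Filter
open scoped ENNReal NNReal

noncomputable section

/-- The half-open unit square `[0,1)²` in `ℝ²`. -/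
def unitSq : Set (ℝ × ℝ) := Set.Ico (0:ℝ) 1 ×ˢ Set.Ico (0:ℝ) 1

/-- The four contractions `B₀, B₁, B₂, B₃` mapping `[0,1)²` onto its four half-open
dyadic subsquares (lower-left, lower-right, upper-left, upper-right). -/
def Bmap (i : Fin 4) (x : ℝ × ℝ) : ℝ × ℝ :=
  (x.1 / 2 + (if i.val % 2 = 1 then (1:ℝ)/2 else 0),
   x.2 / 2 + (if 2 ≤ i.val then (1:ℝ)/2 else 0))

/-- The inverse maps `A₀, A₁, A₂, A₃` of `B₀, …, B₃`. -/
def Amap (i : Fin 4) (x : ℝ × ℝ) : ℝ × ℝ :=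
  (2 * x.1 - (if i.val % 2 = 1 then (1:ℝ) else 0),
   2 * x.2 - (if 2 ≤ i.val then (1:ℝ) else 0))

/-- The four half-open dyadic subsquares `Q₀, Q₁, Q₂, Q₃` of `[0,1)²`. -/
def Qsub (i : Fin 4) : Set (ℝ × ℝ) := Bmap i '' unitSq

/-- The step function `ū = Σ_{i=0}^{3} (i/4)·1_{Q_i}`. -/
def ubar (x : ℝ × ℝ) : ℝ :=
  ∑ i : Fin 4, ((i.val : ℝ) / 4) * (Qsub i).indicator (fun _ => (1:ℝ)) x

/-- The operator `L`: `(Lv)(x) = ū(x) + (1/4) Σ_i v(A_i x)·1_{Q_i}(x)` on `[0,1)²`,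
extended by `0` outside. -/
def Lop (v : ℝ × ℝ → ℝ) : ℝ × ℝ → ℝ :=
  unitSq.indicator fun x =>
    ubar x + (1/4) * ∑ i : Fin 4, (Qsub i).indicator (fun y => v (Amap i y)) x

/-- The `j`-th binary digit `a_j(s) = ⌊2^j s⌋ − 2⌊2^{j−1} s⌋` of `s ∈ [0,1)` (`j ≥ 1`). -/
def bdigit (j : ℕ) (s : ℝ) : ℤ := ⌊(2:ℝ)^j * s⌋ - 2 * ⌊(2:ℝ)^(j-1) * s⌋

/-- The `j`-th quadrant digit `i_j(x) = a_j(x₁) + 2 a_j(x₂) ∈ {0,1,2,3}` of `x ∈ [0,1)²`. -/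
def qdigit (j : ℕ) (x : ℝ × ℝ) : ℤ := bdigit j x.1 + 2 * bdigit j x.2

/-- The Flat Mountain function `u(x) = Σ_{j≥1} i_j(x)·4^{−j}` on `[0,1)²`, `0` outside. -/
def uFM : ℝ × ℝ → ℝ :=
  unitSq.indicator fun x => ∑' j : ℕ, (qdigit (j+1) x : ℝ) / 4^(j+1)

/-- The iterates `u₀ = 0`, `u_{n+1} = L u_n`. -/
def uIter : ℕ → ℝ × ℝ → ℝ
  | 0 => fun _ => 0
  | (n+1) => Lop (uIter n)

/-- The dyadic square `Q_{i₁,…,i_n} = B_{i₁} ∘ ⋯ ∘ B_{i_n} ([0,1)²)` indexed by a finite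
sequence of quadrant digits. -/
def Qseq : List (Fin 4) → Set (ℝ × ℝ)
  | [] => unitSq
  | (i :: l) => Bmap i '' Qseq l

/-- The `j`-th base-4 digit `t_j = ⌊4^j t⌋ − 4⌊4^{j−1} t⌋` of `t ∈ [0,1)` (`j ≥ 1`). -/
def tdigit (j : ℕ) (t : ℝ) : ℤ := ⌊(4:ℝ)^j * t⌋ - 4 * ⌊(4:ℝ)^(j-1) * t⌋

/-- The Lebesgue (Z-order) space-filling curve `γ`. -/
def lcurve (t : ℝ) : ℝ × ℝ :=
  (∑' j : ℕ, ((tdigit (j+1) t % 2 : ℤ) : ℝ) / 2^(j+1),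
   ∑' j : ℕ, ((tdigit (j+1) t / 2 : ℤ) : ℝ) / 2^(j+1))

end

/-!
The quadrant digits `i_j(x)` are exactly the base-4 digits of `u(x)`: the series
`Σ i_j(x) 4^{-j}` is a proper base-4 expansion, since its digits cannot be eventually `3`
(that would make the binary digits of `x₁` eventually `1`). On the other hand every `s` with
`t ≤ s < (⌊4ⁿ t⌋ + 1) / 4ⁿ = t + h₀` has the same first `n` base-4 digits as `t`. Hence a point
of the band has quadrant digits `t₁, …, t_n`, which places it in `Q_{t₁,…,t_n}`.
-/

open Finset

lemma floor_two_mul_sub_two_mul_floor_mem (y : ℝ) :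
    0 ≤ ⌊2 * y⌋ - 2 * ⌊y⌋ ∧ ⌊2 * y⌋ - 2 * ⌊y⌋ ≤ 1 := by
  have h₁ : 2 * ⌊y⌋ ≤ ⌊2 * y⌋ := Int.le_floor.mpr (by push_cast; linarith [Int.floor_le y])
  have h₂ : ⌊2 * y⌋ < 2 * ⌊y⌋ + 2 :=
    Int.floor_lt.mpr (by push_cast; linarith [Int.lt_floor_add_one y])
  omega

lemma bdigit_succ (j : ℕ) (s : ℝ) :
    bdigit (j + 1) s = ⌊2 * (2 ^ j * s)⌋ - 2 * ⌊(2 : ℝ) ^ j * s⌋ := by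
  rw [bdigit, Nat.add_sub_cancel, pow_succ', mul_assoc]

lemma bdigit_succ_nonneg (j : ℕ) (s : ℝ) : 0 ≤ bdigit (j + 1) s :=
  bdigit_succ j s ▸ (floor_two_mul_sub_two_mul_floor_mem _).1

lemma bdigit_succ_le_one (j : ℕ) (s : ℝ) : bdigit (j + 1) s ≤ 1 :=
  bdigit_succ j s ▸ (floor_two_mul_sub_two_mul_floor_mem _).2

/- If all digits beyond the `k`-th were `1`, then `⌊2^(m+k) s⌋ + 1 = 2^m (⌊2^k s⌋ + 1)` for
every `m`, forcing `2^k s ≥ ⌊2^k s⌋ + 1`. -/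
lemma exists_bdigit_eq_zero (s : ℝ) (k : ℕ) : ∃ j, bdigit (j + k + 1) s = 0 := by
  by_contra! hne
  have hone : ∀ j, bdigit (j + k + 1) s = 1 := fun j => by
    have := bdigit_succ_nonneg (j + k) s
    have := bdigit_succ_le_one (j + k) s
    have := hne j
    omega
  have hfloor : ∀ m : ℕ, ⌊(2 : ℝ) ^ (m + k) * s⌋ + 1 = 2 ^ m * (⌊(2 : ℝ) ^ k * s⌋ + 1) := by
    intro m
    induction m with
    | zero => simp
    | succ m ih =>
      have h := hone m
      rw [bdigit, Nat.add_sub_cancel] at h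
      rw [show m + 1 + k = m + k + 1 by ring]
      linear_combination h + 2 * ih
  set δ := (⌊(2 : ℝ) ^ k * s⌋ : ℝ) + 1 - 2 ^ k * s
  have hδ : 0 < δ := by linarith [Int.lt_floor_add_one ((2 : ℝ) ^ k * s)]
  obtain ⟨m, hm⟩ := pow_unbounded_of_one_lt δ⁻¹ one_lt_two
  have hle : (2 : ℝ) ^ m * δ ≤ 1 := by
    have h := Int.floor_le ((2 : ℝ) ^ (m + k) * s)
    have hc : (⌊(2 : ℝ) ^ (m + k) * s⌋ : ℝ) + 1 = 2 ^ m * (⌊(2 : ℝ) ^ k * s⌋ + 1) := by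
      exact_mod_cast hfloor m
    have hδm : (2 : ℝ) ^ m * δ = 2 ^ m * (⌊(2 : ℝ) ^ k * s⌋ + 1) - 2 ^ (m + k) * s := by
      rw [pow_add]; ring
    linarith
  rw [inv_lt_iff_one_lt_mul₀ hδ] at hm
  linarith

lemma qdigit_succ_nonneg (j : ℕ) (x : ℝ × ℝ) : 0 ≤ qdigit (j + 1) x := by
  have := bdigit_succ_nonneg j x.1
  have := bdigit_succ_nonneg j x.2
  unfold qdigit
  omega

lemma qdigit_succ_le_three (j : ℕ) (x : ℝ × ℝ) : qdigit (j + 1) x ≤ 3 := by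
  have := bdigit_succ_le_one j x.1
  have := bdigit_succ_le_one j x.2
  unfold qdigit
  omega

lemma exists_qdigit_lt_three (x : ℝ × ℝ) (k : ℕ) : ∃ j, qdigit (j + k + 1) x < 3 := by
  obtain ⟨j, hj⟩ := exists_bdigit_eq_zero x.1 k
  refine ⟨j, ?_⟩
  have := bdigit_succ_le_one (j + k) x.2
  unfold qdigit
  omega

section DigitSeries

variable {b : ℕ} {d : ℕ → ℤ}

lemma hasSum_sub_one_div_pow (hb : 1 < b) (k : ℕ) :
    HasSum (fun j : ℕ => ((b : ℝ) - 1) / b ^ (j + k + 1)) (1 / b ^ k) := by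
  have hb' : (1 : ℝ) < b := by exact_mod_cast hb
  have hb0 : (b : ℝ) ≠ 0 := by positivity
  have hb1 : (b : ℝ) - 1 ≠ 0 := by linarith
  have h := (hasSum_geometric_of_lt_one (by positivity) (inv_lt_one_of_one_lt₀ hb')).mul_left
    (((b : ℝ) - 1) / b ^ (k + 1))
  have hsum : ((b : ℝ) - 1) / b ^ (k + 1) * (1 - (b : ℝ)⁻¹)⁻¹ = 1 / b ^ k := by
    rw [pow_succ]
    field_simp
  have hterm : (fun j : ℕ => ((b : ℝ) - 1) / b ^ (k + 1) * (b : ℝ)⁻¹ ^ j)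
      = fun j => ((b : ℝ) - 1) / b ^ (j + k + 1) := by
    ext j
    rw [inv_pow]
    field_simp
    ring
  rwa [hsum, hterm] at h

lemma exists_intCast_eq_pow_mul_sum (hb : b ≠ 0) (d : ℕ → ℤ) (k : ℕ) :
    ∃ m : ℤ, (m : ℝ) = b ^ k * ∑ j ∈ range k, (d j : ℝ) / b ^ (j + 1) := by
  induction k with
  | zero => exact ⟨0, by simp⟩
  | succ k ih =>
    obtain ⟨m, hm⟩ := ih
    refine ⟨b * m + d k, ?_⟩
    push_cast
    rw [hm, sum_range_succ]
    field_simp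
    ring

lemma div_pow_le_sub_one_div_pow (hd : ∀ j, d j ≤ b - 1) (j : ℕ) :
    (d j : ℝ) / b ^ (j + 1) ≤ ((b : ℝ) - 1) / b ^ (j + 1) := by
  gcongr
  exact_mod_cast hd j

lemma summable_digits (hb : 1 < b) (hd₀ : ∀ j, 0 ≤ d j) (hd : ∀ j, d j ≤ b - 1) :
    Summable fun j => (d j : ℝ) / b ^ (j + 1) :=
  .of_nonneg_of_le (fun j => by have := hd₀ j; positivity)
    (div_pow_le_sub_one_div_pow hd) (by simpa using (hasSum_sub_one_div_pow hb 0).summable)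

lemma tsum_digits_tail_lt (hb : 1 < b) (hd₀ : ∀ j, 0 ≤ d j) (hd : ∀ j, d j ≤ b - 1) (k : ℕ)
    (hlt : ∃ j, d (j + k) < b - 1) :
    ∑' j, (d (j + k) : ℝ) / b ^ (j + k + 1) < 1 / b ^ k := by
  obtain ⟨j₀, hj₀⟩ := hlt
  rw [← (hasSum_sub_one_div_pow hb k).tsum_eq]
  refine Summable.tsum_lt_tsum_of_nonneg (i := j₀) (fun j => by have := hd₀ (j + k); positivity)
    (fun j => div_pow_le_sub_one_div_pow hd (j + k)) ?_ (hasSum_sub_one_div_pow hb k).summable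
  gcongr
  exact_mod_cast hj₀

lemma floor_pow_mul_tsum_digits (hb : 1 < b) (hd₀ : ∀ j, 0 ≤ d j) (hd : ∀ j, d j ≤ b - 1)
    (hlt : ∀ k, ∃ j, d (j + k) < b - 1) (k : ℕ) :
    (⌊(b : ℝ) ^ k * ∑' j, (d j : ℝ) / b ^ (j + 1)⌋ : ℝ)
      = b ^ k * ∑ j ∈ range k, (d j : ℝ) / b ^ (j + 1) := by
  obtain ⟨m, hm⟩ := exists_intCast_eq_pow_mul_sum (b := b) (by omega) d k
  have htail₀ : 0 ≤ ∑' j, (d (j + k) : ℝ) / b ^ (j + k + 1) :=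
    tsum_nonneg fun j => by have := hd₀ (j + k); positivity
  have htail := tsum_digits_tail_lt hb hd₀ hd k (hlt k)
  have hbk : (0 : ℝ) < b ^ k := by positivity
  rw [← hm, Int.cast_inj, Int.floor_eq_iff, ← (summable_digits hb hd₀ hd).sum_add_tsum_nat_add k,
    mul_add, ← hm]
  rw [lt_div_iff₀ hbk] at htail
  constructor <;> nlinarith

end DigitSeries

lemma tdigit_succ_tsum_digits {d : ℕ → ℤ} (hd₀ : ∀ j, 0 ≤ d j) (hd : ∀ j, d j ≤ 3)
    (hlt : ∀ k, ∃ j, d (j + k) < 3) (k : ℕ) :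
    tdigit (k + 1) (∑' j, (d j : ℝ) / 4 ^ (j + 1)) = d k := by
  have hfloor := floor_pow_mul_tsum_digits (b := 4) (by norm_num) hd₀ (by simpa using hd)
    (by simpa using hlt)
  push_cast at hfloor
  apply Int.cast_injective (α := ℝ)
  rw [tdigit, Nat.add_sub_cancel]
  push_cast
  rw [hfloor, hfloor, sum_range_succ]
  field_simp
  ring

lemma tdigit_succ_uFM {x : ℝ × ℝ} (hx : x ∈ unitSq) (k : ℕ) :
    tdigit (k + 1) (uFM x) = qdigit (k + 1) x := by
  rw [uFM, indicator_of_mem hx]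
  exact tdigit_succ_tsum_digits (fun j => qdigit_succ_nonneg j x)
    (fun j => qdigit_succ_le_three j x) (exists_qdigit_lt_three x) k

lemma floor_pow_mul_eq_of_le {b : ℕ} (hb : b ≠ 0) {s t : ℝ} {m n : ℕ} (hmn : m ≤ n)
    (h : ⌊(b : ℝ) ^ n * s⌋ = ⌊(b : ℝ) ^ n * t⌋) : ⌊(b : ℝ) ^ m * s⌋ = ⌊(b : ℝ) ^ m * t⌋ := by
  have hdiv : ∀ r : ℝ, ⌊(b : ℝ) ^ m * r⌋ = ⌊(b : ℝ) ^ n * r⌋ / (b ^ (n - m) : ℕ) := by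
    intro r
    rw [← Int.floor_div_natCast, ← Nat.sub_add_cancel hmn, pow_add]
    push_cast
    rw [Nat.add_sub_cancel]
    field_simp
  rw [hdiv, hdiv, h]

lemma tdigit_eq_of_le_of_lt {s t : ℝ} {n k : ℕ} (hts : t ≤ s)
    (hs : s < (⌊(4 : ℝ) ^ n * t⌋ + 1) / 4 ^ n) (hk : k < n) :
    tdigit (k + 1) s = tdigit (k + 1) t := by
  have hn : ⌊(4 : ℝ) ^ n * s⌋ = ⌊(4 : ℝ) ^ n * t⌋ := by
    rw [Int.floor_eq_iff]
    rw [lt_div_iff₀ (by positivity)] at hs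
    constructor <;> nlinarith [Int.floor_le ((4 : ℝ) ^ n * t), pow_pos (four_pos (α := ℝ)) n]
  have hfloor : ∀ m ≤ n, ⌊(4 : ℝ) ^ m * s⌋ = ⌊(4 : ℝ) ^ m * t⌋ := fun m hm => by
    exact_mod_cast floor_pow_mul_eq_of_le (b := 4) four_ne_zero hm (by exact_mod_cast hn)
  rw [tdigit, tdigit, hfloor _ hk, hfloor _ (by omega)]

lemma sum_range_tdigit_div (t : ℝ) (n : ℕ) :
    ∑ j ∈ range n, (tdigit (j + 1) t : ℝ) / 4 ^ (j + 1) = ⌊(4 : ℝ) ^ n * t⌋ / 4 ^ n - ⌊t⌋ := by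
  have hterm : ∀ j, (tdigit (j + 1) t : ℝ) / 4 ^ (j + 1)
      = ⌊(4 : ℝ) ^ (j + 1) * t⌋ / 4 ^ (j + 1) - ⌊(4 : ℝ) ^ j * t⌋ / 4 ^ j := by
    intro j
    rw [tdigit, Nat.add_sub_cancel]
    push_cast
    field_simp
    ring
  rw [sum_congr rfl fun j _ => hterm j, sum_range_sub (fun j => (⌊(4 : ℝ) ^ j * t⌋ : ℝ) / 4 ^ j)]
  simp

lemma bdigit_two_mul_sub_intCast (s : ℝ) (a : ℤ) (j : ℕ) :
    bdigit (j + 1) (2 * s - a) = bdigit (j + 2) s := by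
  have hshift : ∀ i : ℕ, (2 : ℝ) ^ i * (2 * s - a) = 2 ^ (i + 1) * s - ((2 ^ i * a : ℤ) : ℝ) :=
    fun i => by push_cast; ring
  simp only [bdigit, Nat.add_sub_cancel, show j + 2 - 1 = j + 1 from rfl]
  rw [hshift, hshift, Int.floor_sub_intCast, Int.floor_sub_intCast]
  ring

lemma two_mul_sub_bdigit_one_mem_Ico {s : ℝ} (hs : s ∈ Ico (0 : ℝ) 1) :
    2 * s - bdigit 1 s ∈ Ico (0 : ℝ) 1 := by
  have hfract : 2 * s - bdigit 1 s = Int.fract (2 * s) := by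
    simp only [bdigit, pow_one, Nat.sub_self, pow_zero, one_mul, Int.floor_eq_zero_iff.mpr hs]
    rw [Int.fract]
    push_cast
    ring
  rw [hfract]
  exact ⟨Int.fract_nonneg _, Int.fract_lt_one _⟩

lemma Bmap_Amap (i : Fin 4) (x : ℝ × ℝ) : Bmap i (Amap i x) = x := by
  ext <;> simp only [Bmap, Amap] <;> split_ifs <;> ring

lemma Amap_eq_of_qdigit_one {i : Fin 4} {x : ℝ × ℝ} (hi : qdigit 1 x = i) :
    Amap i x = (2 * x.1 - bdigit 1 x.1, 2 * x.2 - bdigit 1 x.2) := by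
  have : 0 ≤ bdigit 1 x.1 := bdigit_succ_nonneg 0 x.1
  have : bdigit 1 x.1 ≤ 1 := bdigit_succ_le_one 0 x.1
  have : 0 ≤ bdigit 1 x.2 := bdigit_succ_nonneg 0 x.2
  have : bdigit 1 x.2 ≤ 1 := bdigit_succ_le_one 0 x.2
  unfold qdigit at hi
  have hi4 := i.isLt
  ext <;> simp only [Amap] <;> split_ifs <;> congr 1 <;> exact_mod_cast (by omega)

lemma mem_Qseq_of_qdigit {l : List (Fin 4)} {x : ℝ × ℝ} (hx : x ∈ unitSq)
    (hl : ∀ j : Fin l.length, qdigit (j + 1) x = (l.get j).val) : x ∈ Qseq l := by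
  induction l generalizing x with
  | nil => exact hx
  | cons i l ih =>
    have hA := Amap_eq_of_qdigit_one (i := i) (hl ⟨0, by simp⟩)
    refine ⟨Amap i x, ih ?_ fun j => ?_, Bmap_Amap i x⟩
    · rw [hA]
      exact ⟨two_mul_sub_bdigit_one_mem_Ico hx.1, two_mul_sub_bdigit_one_mem_Ico hx.2⟩
    · rw [hA, qdigit, bdigit_two_mul_sub_intCast, bdigit_two_mul_sub_intCast]
      exact hl j.succ

theorem stmt17_general (t : ℝ) (ht : t ∈ Set.Ico (0:ℝ) 1) (n : ℕ) :
    0 < (∑ j : Fin n, (tdigit ((j : ℕ) + 1) t : ℝ) / 4 ^ ((j : ℕ) + 1)) + 1 / 4 ^ n - t ∧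
    ∀ h : ℝ, 0 < h →
      h < (∑ j : Fin n, (tdigit ((j : ℕ) + 1) t : ℝ) / 4 ^ ((j : ℕ) + 1)) + 1 / 4 ^ n - t →
      ∀ l : List (Fin 4), l.length = n →
        (∀ j : Fin l.length, ((l.get j).val : ℤ) = tdigit ((j : ℕ) + 1) t) →
        {x ∈ unitSq | t ≤ uFM x ∧ uFM x ≤ t + h} ⊆ Qseq l := by
  have hh₀ : (∑ j : Fin n, (tdigit ((j : ℕ) + 1) t : ℝ) / 4 ^ ((j : ℕ) + 1)) + 1 / 4 ^ n - t
      = (⌊(4 : ℝ) ^ n * t⌋ + 1) / 4 ^ n - t := by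
    rw [Fin.sum_univ_eq_sum_range (fun j => (tdigit (j + 1) t : ℝ) / 4 ^ (j + 1)),
      sum_range_tdigit_div, Int.floor_eq_zero_iff.mpr ht]
    ring
  have hlt : t < (⌊(4 : ℝ) ^ n * t⌋ + 1) / 4 ^ n := by
    rw [lt_div_iff₀ (by positivity)]
    linarith [Int.lt_floor_add_one ((4 : ℝ) ^ n * t)]
  rw [hh₀]
  refine ⟨sub_pos.mpr hlt, fun h _ hh l hlen hl x ⟨hx, htx, hxt⟩ =>
    mem_Qseq_of_qdigit hx fun j => ?_⟩
  rw [← tdigit_succ_uFM hx, tdigit_eq_of_le_of_lt htx (by linarith) (lt_of_lt_of_eq j.isLt hlen),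
    hl j]

/-- For `t ∈ [0,1)` and `n ≥ 1`, with `h₀ := Σ_{j=1}^{n} t_j 4^{−j} + 4^{−n} − t > 0`,
for all `0 < h < h₀` the band `{ x ∈ [0,1)² : t ≤ u(x) ≤ t + h }` is contained in the
dyadic square indexed by the first `n` base-4 digits of `t`. -/
theorem stmt17 (t : ℝ) (ht : t ∈ Set.Ico (0:ℝ) 1) (n : ℕ) (hn : 1 ≤ n) :
    0 < (∑ j : Fin n, (tdigit ((j : ℕ) + 1) t : ℝ) / 4 ^ ((j : ℕ) + 1)) + 1 / 4 ^ n - t ∧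
    ∀ h : ℝ, 0 < h →
      h < (∑ j : Fin n, (tdigit ((j : ℕ) + 1) t : ℝ) / 4 ^ ((j : ℕ) + 1)) + 1 / 4 ^ n - t →
      ∀ l : List (Fin 4), l.length = n →
        (∀ j : Fin l.length, ((l.get j).val : ℤ) = tdigit ((j : ℕ) + 1) t) →
        {x ∈ unitSq | t ≤ uFM x ∧ uFM x ≤ t + h} ⊆ Qseq l :=
  stmt17_general t ht n
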